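/- arXiv:1605.00351 — 7 statements merged into one kernel-verified Lean document; each statement's English description precedes it below -/
import Mathlib

section
/- Let q be a prime power, n ≥ 2, ζ a primitive element of F_{q^n}, F : F_{q^n} → F_{q^n} a function, and f : Z/(q^n−1)Z → F_{q^n} defined by f(k) = F(ζ^k). Let r be the least period of F_ζ[f]. If the support of F contains an element of degree n over F_q, then r does not divide q^d − 1 for any proper positive divisor d of n. -/
/-- The discrete Fourier transform based on `ζ`: `F_ζ[f](i) = ∑_j f(j) ζ^{ij}`. -/
def dft {K : Type*} [CommRing K] (N : ℕ) (ζ : K) (f : ZMod N → K) (i : ZMod N) : K :=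
  ∑ j ∈ Finset.range N, f (j : ZMod N) * ζ ^ (i.val * j)

/-- `f : ℤ/Nℤ → α` is `r`-periodic if `f(i + r) = f(i)` for all `i`. -/
def IsPeriodicZMod {N : ℕ} {α : Type*} (f : ZMod N → α) (r : ℕ) : Prop :=
  ∀ i : ZMod N, f (i + (r : ZMod N)) = f i

/-- The least period of `f : ℤ/Nℤ → α`. -/
noncomputable def leastPeriod {N : ℕ} {α : Type*} (f : ZMod N → α) : ℕ :=
  sInf {r : ℕ | 0 < r ∧ IsPeriodicZMod f r}

/-!
If the least period of `F_ζ[f]` divides `R = q^d - 1`, then `F_ζ[f]` is `R`-periodic. Shifting the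
argument of the transform by `R` multiplies `f` pointwise by `j ↦ ζ^{Rj}`, so the transform of
`f(j) (ζ^{Rj} - 1)` vanishes. The transform is injective: a polynomial of degree `< N` vanishing
at the `N` distinct powers of `ζ` is zero. Evaluating at `ξ = ζ^k` in the support gives
`ξ^{q^d} = ξ`, so the minimal polynomial of `ξ` divides `X^{q^d} - X` and its degree `n`
divides `d < n`.
-/

open Polynomial

lemma isPeriodicZMod_of_leastPeriod_dvd {N : ℕ} {α : Type*} {f : ZMod N → α} {m : ℕ}
    (h : leastPeriod f ∣ m) : IsPeriodicZMod f m := by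
  obtain ⟨c, rfl⟩ := h
  rcases Set.eq_empty_or_nonempty {r : ℕ | 0 < r ∧ IsPeriodicZMod f r} with hempty | hne
  · intro i
    simp [leastPeriod, hempty]
  · have hper : Function.Periodic f (leastPeriod f : ZMod N) := (Nat.sInf_mem hne).2
    simpa [IsPeriodicZMod, mul_comm] using hper.nat_mul c

section
variable {K : Type*} [CommRing K] {N : ℕ} {ζ : K}

lemma pow_eq_pow_of_natCast_eq (hζ : ζ ^ N = 1) {a b : ℕ} (h : (a : ZMod N) = b) :
    ζ ^ a = ζ ^ b := by
  rw [pow_eq_pow_mod a hζ, pow_eq_pow_mod b hζ, (ZMod.natCast_eq_natCast_iff' a b N).1 h]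

lemma dft_add_natCast_sub_dft [NeZero N] (hζ : ζ ^ N = 1) (f : ZMod N → K) (R : ℕ)
    (i : ZMod N) :
    dft N ζ f (i + R) - dft N ζ f i = dft N ζ (fun j => f j * (ζ ^ (R * j.val) - 1)) i := by
  simp only [dft, ← Finset.sum_sub_distrib]
  refine Finset.sum_congr rfl fun j _ => ?_
  have hshift : ζ ^ ((i + R).val * j) = ζ ^ (i.val * j) * ζ ^ (R * j) := by
    rw [← pow_add, ← add_mul]
    exact pow_eq_pow_of_natCast_eq hζ (by simp)
  have htwist : ζ ^ (R * (j : ZMod N).val) = ζ ^ (R * j) :=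
    pow_eq_pow_of_natCast_eq hζ (by simp)
  rw [hshift, htwist]
  ring

lemma eq_zero_of_dft_eq_zero [IsDomain K] [NeZero N] (hζ : IsPrimitiveRoot ζ N)
    {f : ZMod N → K} (h : dft N ζ f = 0) : f = 0 := by
  set P : K[X] := ∑ j ∈ Finset.range N, C (f j) * X ^ j
  have hP : P = 0 := by
    refine eq_zero_of_natDegree_lt_card_of_eval_eq_zero P (f := fun i : ZMod N => ζ ^ i.val)
      (fun a b hab => ZMod.val_injective N (hζ.pow_inj (ZMod.val_lt a) (ZMod.val_lt b) hab))
      (fun i => ?_) ?_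
    · simpa [P, dft, eval_finsetSum, ← pow_mul] using congrFun h i
    · rw [ZMod.card]
      have hdeg : P.natDegree ≤ N - 1 := natDegree_sum_le_of_forall_le _ _
        fun j hj => (natDegree_C_mul_X_pow_le _ _).trans (by simp at hj; omega)
      have := NeZero.pos N
      omega
  funext i
  simpa [P, finsetSum_coeff, coeff_C_mul_X_pow, ZMod.val_lt] using congrArg (coeff · i.val) hP

end

lemma minpoly.natDegree_dvd_of_pow_card_pow_eq_self {F K : Type*} [Field F] [Field K]
    [Algebra F K] {ξ : K} (hξ : IsIntegral F ξ) {d : ℕ} (h : ξ ^ Nat.card F ^ d = ξ) :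
    (minpoly F ξ).natDegree ∣ d :=
  (minpoly.irreducible hξ).natDegree_dvd_of_dvd_X_pow_card_pow_sub_X
    (minpoly.dvd F ξ (by simp [h]))

lemma IsPrimitiveRoot.exists_pow_val_eq {K : Type*} [CommRing K] [IsDomain K] {N : ℕ}
    [NeZero N] {ζ ξ : K} (hζ : IsPrimitiveRoot ζ N) (hξ : ξ ^ N = 1) :
    ∃ k : ZMod N, ζ ^ k.val = ξ := by
  obtain ⟨k, hk, rfl⟩ := hζ.eq_pow_of_pow_eq_one hξ
  exact ⟨k, by rw [ZMod.val_natCast_of_lt hk]⟩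

theorem leastPeriod_not_dvd_of_degree_n_in_support_general
    {F K : Type*} [Field F] [Fintype F] [Field K] [Fintype K] [Algebra F K]
    (n : ℕ)
    (ζ : K) (hζ : orderOf ζ = Fintype.card K - 1)
    (Fn : K → K)
    (hsupp : ∃ ξ : K, Fn ξ ≠ 0 ∧ (minpoly F ξ).natDegree = n) :
    ∀ d : ℕ, 0 < d → d ∣ n → d < n →
      ¬ (leastPeriod (dft (Fintype.card K - 1) ζ (fun k => Fn (ζ ^ k.val))) ∣
          Fintype.card F ^ d - 1) := by
  rintro d hd - hdlt hdvd
  obtain ⟨ξ, hFξ, hdeg⟩ := hsupp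
  set N := Fintype.card K - 1
  set R := Fintype.card F ^ d - 1
  have : NeZero N := ⟨by have := Fintype.one_lt_card (α := K); omega⟩
  have hprim : IsPrimitiveRoot ζ N := hζ ▸ IsPrimitiveRoot.orderOf ζ
  rcases eq_or_ne ξ 0 with rfl | hξ0
  · simp at hdeg; omega
  obtain ⟨k, rfl⟩ := hprim.exists_pow_val_eq (FiniteField.pow_card_sub_one_eq_one ξ hξ0)
  have htwist : dft N ζ (fun j => Fn (ζ ^ j.val) * (ζ ^ (R * j.val) - 1)) = 0 := by
    funext i
    rw [← dft_add_natCast_sub_dft hprim.pow_eq_one, isPeriodicZMod_of_leastPeriod_dvd hdvd i,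
      sub_self, Pi.zero_apply]
  have hξR : (ζ ^ k.val) ^ R = 1 := by
    have := congrFun (eq_zero_of_dft_eq_zero hprim htwist) k
    rwa [Pi.zero_apply, mul_eq_zero, or_iff_right hFξ, sub_eq_zero, pow_mul'] at this
  have hfix : (ζ ^ k.val) ^ Nat.card F ^ d = ζ ^ k.val := by
    rw [Nat.card_eq_fintype_card, ← Nat.sub_add_cancel (pow_pos Fintype.card_pos d), pow_succ,
      hξR, one_mul]
  have hnd : n ∣ d := hdeg ▸ minpoly.natDegree_dvd_of_pow_card_pow_eq_self (.of_finite F _) hfix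
  exact absurd (Nat.le_of_dvd hd hnd) (by omega)

theorem leastPeriod_not_dvd_of_degree_n_in_support
    {F K : Type*} [Field F] [Fintype F] [Field K] [Fintype K] [Algebra F K]
    (n : ℕ) (hn : 2 ≤ n) (hcard : Fintype.card K = Fintype.card F ^ n)
    (ζ : K) (hζ : orderOf ζ = Fintype.card K - 1)
    (Fn : K → K)
    (hsupp : ∃ ξ : K, Fn ξ ≠ 0 ∧ (minpoly F ξ).natDegree = n) :
    ∀ d : ℕ, 0 < d → d ∣ n → d < n →
      ¬ (leastPeriod (dft (Fintype.card K - 1) ζ (fun k => Fn (ζ ^ k.val))) ∣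
          Fintype.card F ^ d - 1) :=
  leastPeriod_not_dvd_of_degree_n_in_support_general n ζ hζ Fn hsupp
end

section
/- Let q be a prime power, n ≥ 2, ζ a primitive element of F_{q^n}, F : F_{q^n} → F_{q^n}, and f(k) = F(ζ^k) on Z/(q^n−1)Z. If the support of F contains a primitive element of F_{q^n}, then the least period of F_ζ[f] equals q^n − 1. -/
lemma pow_eq_pow_of_modEq' {K : Type*} [Monoid K] {ζ : K} {N : ℕ} (hζ : orderOf ζ = N)
    {a b : ℕ} (h : a ≡ b [MOD N]) : ζ ^ a = ζ ^ b := by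
  rw [← pow_mod_orderOf ζ a, ← pow_mod_orderOf ζ b, hζ]
  exact congrArg (fun t => ζ ^ t) h

/-- orthogonality -/
lemma orth {K : Type*} [Field K] {N : ℕ} (hN : 0 < N) {ζ : K} (hζ : orderOf ζ = N)
    (m : ℕ) : ∑ i ∈ Finset.range N, ζ ^ (m * i) = if N ∣ m then (N : K) else 0 := by
  have hsum : ∑ i ∈ Finset.range N, ζ ^ (m * i) = ∑ i ∈ Finset.range N, (ζ ^ m) ^ i := by
    refine Finset.sum_congr rfl fun i _ => ?_
    rw [pow_mul]
  by_cases h : N ∣ m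
  · have hm1 : ζ ^ m = 1 := by
      rw [← orderOf_dvd_iff_pow_eq_one, hζ]; exact h
    rw [hsum, if_pos h]
    simp [hm1]
  · have hm1 : ζ ^ m ≠ 1 := fun h1 => h (hζ ▸ orderOf_dvd_of_pow_eq_one h1)
    rw [hsum, geom_sum_eq hm1]
    have : (ζ ^ m) ^ N = 1 := by
      rw [← pow_mul, mul_comm, pow_mul, ← hζ, pow_orderOf_eq_one, one_pow]
    rw [this, sub_self, zero_div, if_neg h]

/-- values of dft at natural casts -/
lemma dft_natCast {K : Type*} [Field K] {N : ℕ} (hN : 0 < N) {ζ : K} (hζ : orderOf ζ = N)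
    (f : ZMod N → K) (m : ℕ) :
    dft N ζ f (m : ZMod N) = ∑ j ∈ Finset.range N, f (j : ZMod N) * ζ ^ (m * j) := by
  haveI : NeZero N := ⟨hN.ne'⟩
  refine Finset.sum_congr rfl fun j _ => ?_
  congr 1
  rw [ZMod.val_natCast]
  exact pow_eq_pow_of_modEq' hζ (Nat.ModEq.mul_right j (Nat.mod_modEq m N))

lemma key {K : Type*} [Field K] {N : ℕ} (hN : 0 < N) {ζ : K} (hζ : orderOf ζ = N)
    (f : ZMod N → K) {r : ℕ} (hper : IsPeriodicZMod (dft N ζ f) r)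
    {k : ℕ} (hk0 : 0 < k) (hkN : k < N) :
    (N : K) * (f (k : ZMod N) * (ζ ^ (r * k) - 1)) = 0 := by
  set k' := N - k with hk'
  have hk'0 : 0 < k' := by omega
  have hk'N : k' < N := by omega
  have hS : ∑ i ∈ Finset.range N,
      (dft N ζ f ((i : ZMod N) + (r : ZMod N)) - dft N ζ f (i : ZMod N)) * ζ ^ (k' * i) = 0 := by
    refine Finset.sum_eq_zero fun i _ => ?_
    rw [hper (i : ZMod N), sub_self, zero_mul]
  have hrw : ∀ i : ℕ,
      (dft N ζ f ((i : ZMod N) + (r : ZMod N)) - dft N ζ f (i : ZMod N)) * ζ ^ (k' * i)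
      = ∑ j ∈ Finset.range N, f (j : ZMod N) * (ζ ^ (r * j) - 1) * ζ ^ ((j + k') * i) := by
    intro i
    have h1 : (i : ZMod N) + (r : ZMod N) = ((i + r : ℕ) : ZMod N) := by push_cast; ring
    rw [h1, dft_natCast hN hζ, dft_natCast hN hζ, ← Finset.sum_sub_distrib,
      Finset.sum_mul]
    refine Finset.sum_congr rfl fun j _ => ?_
    ring
  rw [Finset.sum_congr rfl (fun i _ => hrw i), Finset.sum_comm] at hS
  have hS2 : ∀ j ∈ Finset.range N,
      ∑ i ∈ Finset.range N, f (j : ZMod N) * (ζ ^ (r * j) - 1) * ζ ^ ((j + k') * i)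
      = f (j : ZMod N) * (ζ ^ (r * j) - 1) * (if N ∣ (j + k') then (N : K) else 0) := by
    intro j _
    rw [← Finset.mul_sum, orth hN hζ]
  rw [Finset.sum_congr rfl hS2] at hS
  rw [Finset.sum_eq_single_of_mem k (Finset.mem_range.2 hkN)] at hS
  · have : N ∣ k + k' := ⟨1, by omega⟩
    rw [if_pos this] at hS
    rw [← hS]; ring
  · intro j hj hjk
    have : ¬ N ∣ (j + k') := by
      rintro ⟨c, hc⟩
      have hjN : j < N := Finset.mem_range.1 hj
      have hc2 : c < 2 := Nat.lt_of_mul_lt_mul_left (a := N) (by rw [← hc]; omega)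
      interval_cases c <;> omega
    rw [if_neg this, mul_zero]

theorem leastPeriod_eq_of_primitive_in_support
    {F K : Type*} [Field F] [Fintype F] [Field K] [Fintype K] [Algebra F K]
    (n : ℕ) (hn : 2 ≤ n) (hcard : Fintype.card K = Fintype.card F ^ n)
    (ζ : K) (hζ : orderOf ζ = Fintype.card K - 1)
    (Fn : K → K)
    (hsupp : ∃ ξ : K, Fn ξ ≠ 0 ∧ orderOf ξ = Fintype.card K - 1) :
    leastPeriod (dft (Fintype.card K - 1) ζ (fun k => Fn (ζ ^ k.val))) =
      Fintype.card K - 1 := by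
  classical
  obtain ⟨ξ, hξ0, hξ⟩ := hsupp
  set N := Fintype.card K - 1 with hNdef
  have hcK : 4 ≤ Fintype.card K := by
    have h2 : 2 ≤ Fintype.card F := Fintype.one_lt_card
    calc 4 = 2 ^ 2 := rfl
    _ ≤ 2 ^ n := Nat.pow_le_pow_right (by omega) hn
    _ ≤ Fintype.card F ^ n := Nat.pow_le_pow_left h2 n
    _ = Fintype.card K := hcard.symm
  have hN : 0 < N := by omega
  -- ζ, ξ nonzero
  have hζN1 : ζ ^ N = 1 := by rw [← hζ]; exact pow_orderOf_eq_one ζ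
  have hξN1 : ξ ^ N = 1 := by rw [← hξ]; exact pow_orderOf_eq_one ξ
  have hζne : ζ ≠ 0 := by
    intro h; rw [h, zero_pow hN.ne'] at hζN1; exact zero_ne_one hζN1
  have hξne : ξ ≠ 0 := by
    intro h; rw [h, zero_pow hN.ne'] at hξN1; exact zero_ne_one hξN1
  -- ξ = ζ ^ k with k coprime to N
  set ζu : Kˣ := Units.mk0 ζ hζne with hζu
  set ξu : Kˣ := Units.mk0 ξ hξne with hξu
  have hou : orderOf ζu = N := by rw [← orderOf_units]; exact hζ
  have houξ : orderOf ξu = N := by rw [← orderOf_units]; exact hξ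
  have htop : Subgroup.zpowers ζu = ⊤ := by
    apply Subgroup.eq_top_of_card_eq
    rw [Nat.card_zpowers, hou, Nat.card_eq_fintype_card, Fintype.card_units]
  obtain ⟨k, hk⟩ := mem_powers_iff_mem_zpowers.2 (htop ▸ Subgroup.mem_top ξu)
  have hkζ : ζ ^ k = ξ := congrArg Units.val hk
  have hcop : Nat.gcd N k = 1 := by
    have hk2 : ζu ^ k = ξu := hk
    have hpow : orderOf (ζu ^ k) = N := by rw [hk2]; exact houξ
    rw [orderOf_pow, hou] at hpow
    rcases (Nat.div_eq_self).1 hpow with h | h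
    · omega
    · exact h
  -- replace k by k % N
  set k' := k % N with hk'def
  have hk'ζ : ζ ^ k' = ξ := by
    rw [hk'def]
    rw [pow_eq_pow_of_modEq' hζ (Nat.mod_modEq k N)]
    exact hkζ
  have hcop' : Nat.gcd N k' = 1 := by
    rw [hk'def, Nat.gcd_comm, ← Nat.gcd_rec]; exact hcop
  have hk'N : k' < N := Nat.mod_lt _ hN
  have hk'0 : 0 < k' := by
    rcases Nat.eq_zero_or_pos k' with h | h
    · rw [h, Nat.gcd_zero_right] at hcop'; omega
    · exact h
  -- the function f
  set f : ZMod N → K := fun j => Fn (ζ ^ j.val) with hf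
  have hfk : f (k' : ZMod N) ≠ 0 := by
    haveI : NeZero N := ⟨hN.ne'⟩
    have hv : ((k' : ZMod N)).val = k' := ZMod.val_natCast_of_lt hk'N
    rw [hf]; simp only [hv, hk'ζ]; exact hξ0
  -- N = -1 in K
  have hNK : (N : K) = -1 := by
    have h0 : ((Fintype.card K : ℕ) : K) = 0 := Nat.cast_card_eq_zero K
    rw [hNdef, Nat.cast_sub (by omega), h0, Nat.cast_one, zero_sub]
  -- main argument
  have hmain : ∀ r : ℕ, 0 < r → IsPeriodicZMod (dft N ζ f) r → N ≤ r := by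
    intro r hr hper
    have h := key hN hζ f hper hk'0 hk'N
    rw [hNK, neg_one_mul, neg_eq_zero] at h
    have h3 : ζ ^ (r * k') = 1 := by
      rcases mul_eq_zero.1 h with h' | h'
      · exact absurd h' hfk
      · exact sub_eq_zero.1 h'
    have h4 : N ∣ r * k' := by rw [← hζ]; exact orderOf_dvd_of_pow_eq_one h3
    have hdvd : N ∣ r := (Nat.Coprime.dvd_of_dvd_mul_right (by rwa [Nat.Coprime]) h4)
    exact Nat.le_of_dvd hr hdvd
  have hperN : IsPeriodicZMod (dft N ζ f) N := by
    intro i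
    haveI : NeZero N := ⟨hN.ne'⟩
    rw [ZMod.natCast_self, add_zero]
  rw [leastPeriod]
  apply le_antisymm
  · exact Nat.sInf_le ⟨hN, hperN⟩
  · exact le_csInf ⟨N, hN, hperN⟩ fun r ⟨hr0, hrp⟩ => hmain r hr0 hrp
end

section
/- Let q be a prime power, n ≥ 2, ζ a primitive element of F_{q^n}, F : F_{q^n} → F_{q^n}, and f(k) = F(ζ^k) on Z/(q^n−1)Z. If the least period r of F_ζ[f] does not divide (q^n−1)/Φ_n(q), where Φ_n is the n-th cyclotomic polynomial, then the support of F contains an element of degree n over F_q. -/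
open IntermediateField in
lemma isPeriodicZMod_mul {N : ℕ} {α : Type*} (f : ZMod N → α) {L : ℕ}
    (h : IsPeriodicZMod f L) (k : ℕ) : IsPeriodicZMod f (L * k) := by
  induction k with
  | zero => intro i; simp
  | succ k ih =>
      intro i
      have hc : ((L * (k + 1) : ℕ) : ZMod N) = ((L * k : ℕ) : ZMod N) + (L : ZMod N) := by
        push_cast; ring
      rw [hc, ← add_assoc, h (i + ((L * k : ℕ) : ZMod N))]
      exact ih i

lemma leastPeriod_dvd {N : ℕ} [NeZero N] {α : Type*} (f : ZMod N → α) {r : ℕ}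
    (h : IsPeriodicZMod f r) : leastPeriod f ∣ r := by
  have hNmem : N ∈ {r : ℕ | 0 < r ∧ IsPeriodicZMod f r} :=
    ⟨Nat.pos_of_ne_zero (NeZero.ne N), fun i => by simp⟩
  have hL : leastPeriod f ∈ {r : ℕ | 0 < r ∧ IsPeriodicZMod f r} :=
    Nat.sInf_mem (⟨N, hNmem⟩ : Set.Nonempty _)
  obtain ⟨hLpos, hLper⟩ := hL
  set L := leastPeriod f with hLdef
  have hmod : IsPeriodicZMod f (r % L) := by
    intro i
    have h1 := isPeriodicZMod_mul f hLper (r / L) (i + ((r % L : ℕ) : ZMod N))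
    have h2 : (i + ((r % L : ℕ) : ZMod N)) + ((L * (r / L) : ℕ) : ZMod N)
        = i + (r : ZMod N) := by
      rw [add_assoc, ← Nat.cast_add, Nat.mod_add_div]
    calc f (i + ((r % L : ℕ) : ZMod N))
        = f (i + ((r % L : ℕ) : ZMod N) + ((L * (r / L) : ℕ) : ZMod N)) := h1.symm
      _ = f (i + (r : ZMod N)) := by rw [h2]
      _ = f i := h i
  by_cases h0 : r % L = 0
  · exact Nat.dvd_of_mod_eq_zero h0
  · exfalso
    have hle : L ≤ r % L :=
      Nat.sInf_le (show r % L ∈ {r : ℕ | 0 < r ∧ IsPeriodicZMod f r} from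
        ⟨Nat.pos_of_ne_zero h0, hmod⟩)
    have hlt := Nat.mod_lt r hLpos
    omega

open IntermediateField in
theorem degree_n_in_support_of_leastPeriod_not_dvd
    {F K : Type*} [Field F] [Fintype F] [Field K] [Fintype K] [Algebra F K]
    (n : ℕ) (hn : 2 ≤ n) (hcard : Fintype.card K = Fintype.card F ^ n)
    (ζ : K) (hζ : orderOf ζ = Fintype.card K - 1)
    (Fn : K → K)
    (hper : ¬ ((leastPeriod (dft (Fintype.card K - 1) ζ (fun k => Fn (ζ ^ k.val))) : ℤ) ∣
        ((Fintype.card F : ℤ) ^ n - 1) / (Polynomial.cyclotomic n ℤ).eval (Fintype.card F : ℤ))) :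
    ∃ ξ : K, Fn ξ ≠ 0 ∧ (minpoly F ξ).natDegree = n := by
  by_contra hcon
  push_neg at hcon
  set q := Fintype.card F with hqdef
  have hq2 : 2 ≤ q := Fintype.one_lt_card
  have hn0 : 0 < n := by omega
  have hrank : Module.finrank F K = n := by
    have h := Module.card_eq_pow_finrank (K := F) (V := K)
    rw [hcard] at h
    exact Nat.pow_right_injective hq2 h.symm
  set N := Fintype.card K - 1 with hNdef
  have hq4 : 4 ≤ q ^ n := by
    calc (4 : ℕ) = 2 ^ 2 := by norm_num
    _ ≤ 2 ^ n := Nat.pow_le_pow_right (by norm_num) hn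
    _ ≤ q ^ n := Nat.pow_le_pow_left hq2 n
  have hNpos : 0 < N := by omega
  haveI : NeZero N := ⟨hNpos.ne'⟩
  set Φ := (Polynomial.cyclotomic n ℤ).eval (q : ℤ) with hΦdef
  -- key divisibility
  have key : ∀ m : ℕ, 0 < m → m ∣ n → m ≠ n → Φ * ((q : ℤ) ^ m - 1) ∣ (q : ℤ) ^ n - 1 := by
    intro m hm hdvd hne
    have hmn : m < n := lt_of_le_of_ne (Nat.le_of_dvd hn0 hdvd) hne
    have h1 : insert n m.divisors ⊆ n.divisors := by
      intro d hd
      rcases Finset.mem_insert.mp hd with rfl | hd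
      · exact Nat.mem_divisors_self _ (by omega)
      · exact Nat.divisors_subset_of_dvd (by omega) hdvd hd
    have hnot : n ∉ m.divisors := by
      intro hmem
      have := Nat.le_of_dvd hm (Nat.mem_divisors.mp hmem).1
      omega
    have hpoly : Polynomial.cyclotomic n ℤ * (Polynomial.X ^ m - 1)
        ∣ (Polynomial.X ^ n - 1 : Polynomial ℤ) := by
      have h2 : (∏ i ∈ insert n m.divisors, Polynomial.cyclotomic i ℤ)
          ∣ ∏ i ∈ n.divisors, Polynomial.cyclotomic i ℤ :=
        Finset.prod_dvd_prod_of_subset _ _ _ h1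
      rwa [Finset.prod_insert hnot, Polynomial.prod_cyclotomic_eq_X_pow_sub_one hm,
        Polynomial.prod_cyclotomic_eq_X_pow_sub_one hn0] at h2
    have := map_dvd (Polynomial.evalRingHom (q : ℤ)) hpoly
    simpa using this
  have hqn1 : (q : ℤ) ^ n - 1 ≠ 0 := by
    have : (4 : ℤ) ≤ (q : ℤ) ^ n := by exact_mod_cast hq4
    omega
  have hΦdvd : Φ ∣ (q : ℤ) ^ n - 1 :=
    (dvd_mul_right Φ _).trans (key 1 one_pos (one_dvd n) (by omega))
  have hΦ0 : Φ ≠ 0 := by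
    intro h0
    rw [h0] at hΦdvd
    exact hqn1 (zero_dvd_iff.mp hΦdvd)
  set Rint := ((q : ℤ) ^ n - 1) / Φ with hRdef
  have hRmul : Rint * Φ = (q : ℤ) ^ n - 1 := Int.ediv_mul_cancel hΦdvd
  set Rn := Rint.natAbs with hRndef
  have hsub : ∀ m : ℕ, 0 < m → m ∣ n → m ≠ n → q ^ m - 1 ∣ Rn := by
    intro m hm hdvd hne
    have h1 : Φ * ((q : ℤ) ^ m - 1) ∣ Φ * Rint := by
      rw [mul_comm Φ Rint, hRmul]; exact key m hm hdvd hne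
    have h2 : ((q : ℤ) ^ m - 1) ∣ Rint := (mul_dvd_mul_iff_left hΦ0).mp h1
    have hc : ((q ^ m - 1 : ℕ) : ℤ) = (q : ℤ) ^ m - 1 := by
      rw [Nat.cast_sub (Nat.one_le_pow _ _ (by omega))]; push_cast; ring
    rw [← hc] at h2
    have := Int.natAbs_dvd_natAbs.mpr h2
    simpa using this
  -- ζ is nonzero and has order N
  have hζN : ζ ^ N = 1 := by rw [← hζ]; exact pow_orderOf_eq_one ζ
  have hζ0 : ζ ≠ 0 := by
    rintro rfl
    rw [zero_pow hNpos.ne'] at hζN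
    exact zero_ne_one hζN
  -- support elements kill ζ^(Rn * j)
  have hsupp : ∀ j : ℕ, Fn (ζ ^ j) ≠ 0 → ζ ^ (Rn * j) = 1 := by
    intro j hj
    set ξ := ζ ^ j with hξdef
    have hint : IsIntegral F ξ := IsIntegral.of_finite F ξ
    set m := (minpoly F ξ).natDegree with hmdef
    have hmpos : 0 < m := minpoly.natDegree_pos hint
    have hmdvd : m ∣ n := hrank ▸ minpoly.degree_dvd hint
    have hmne : m ≠ n := hcon ξ hj
    have hξne : ξ ≠ 0 := pow_ne_zero _ hζ0
    have hpow : ξ ^ (q ^ m - 1) = 1 := by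
      have hfr : Module.finrank F F⟮ξ⟯ = m := IntermediateField.adjoin.finrank hint
      haveI : Fintype F⟮ξ⟯ := Fintype.ofFinite _
      have hcardE : Fintype.card F⟮ξ⟯ = q ^ m := by
        rw [Module.card_eq_pow_finrank (K := F) (V := F⟮ξ⟯), hfr]
      have hgen : ((IntermediateField.AdjoinSimple.gen F ξ : F⟮ξ⟯) : K) = ξ := rfl
      have hgne : IntermediateField.AdjoinSimple.gen F ξ ≠ 0 := by
        intro h0
        apply hξne
        rw [← hgen, h0]
        simp
      have h1 := FiniteField.pow_card_sub_one_eq_one _ hgne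
      rw [hcardE] at h1
      have := congrArg ((↑) : F⟮ξ⟯ → K) h1
      simpa [hgen] using this
    have hNdvd : N ∣ j * (q ^ m - 1) := by
      rw [← hζ]
      apply orderOf_dvd_of_pow_eq_one
      rw [pow_mul]
      exact hpow
    have hjd : j * (q ^ m - 1) ∣ Rn * j := by
      rw [mul_comm Rn j]
      exact mul_dvd_mul_left j (hsub m hmpos hmdvd hmne)
    have : N ∣ Rn * j := hNdvd.trans hjd
    rw [← hζ] at this
    exact orderOf_dvd_iff_pow_eq_one.mp this
  -- the DFT is Rn-periodic
  have hperiodic : IsPeriodicZMod (dft N ζ (fun k => Fn (ζ ^ k.val))) Rn := by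
    intro i
    unfold dft
    apply Finset.sum_congr rfl
    intro j hj
    dsimp only
    have hjlt := Finset.mem_range.mp hj
    have hval : ((j : ℕ) : ZMod N).val = j := ZMod.val_natCast_of_lt hjlt
    by_cases hfj : Fn (ζ ^ ((j : ZMod N)).val) = 0
    · rw [hfj, zero_mul, zero_mul]
    · have h1 : ζ ^ (Rn * j) = 1 := hsupp j (by rwa [hval] at hfj)
      have hcast : (((i + (Rn : ZMod N)).val : ℕ) : ZMod N) = ((i.val + Rn : ℕ) : ZMod N) := by
        push_cast [ZMod.natCast_val]
        simp [ZMod.natCast_val]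
      have h2 : (i + (Rn : ZMod N)).val ≡ i.val + Rn [MOD N] :=
        (ZMod.natCast_eq_natCast_iff _ _ _).mp hcast
      have hpowmod : ∀ a : ℕ, ζ ^ a = ζ ^ (a % N) := by
        intro a
        conv_lhs => rw [← Nat.mod_add_div a N]
        rw [pow_add, pow_mul, hζN, one_pow, mul_one]
      have h3 : ζ ^ ((i + (Rn : ZMod N)).val * j) = ζ ^ (i.val * j + Rn * j) := by
        have hm : ((i + (Rn : ZMod N)).val * j) ≡ (i.val * j + Rn * j) [MOD N] := by
          simpa [add_mul] using h2.mul_right j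
        rw [hpowmod ((i + (Rn : ZMod N)).val * j), hpowmod (i.val * j + Rn * j)]
        exact congrArg (fun t => ζ ^ t) hm
      rw [h3, pow_add, h1, mul_one]
  have hLdvd := leastPeriod_dvd _ hperiodic
  apply hper
  have h1 : ((leastPeriod (dft N ζ (fun k => Fn (ζ ^ k.val))) : ℕ) : ℤ) ∣ (Rn : ℤ) :=
    Int.natCast_dvd_natCast.mpr hLdvd
  exact h1.trans (Int.natAbs_dvd.mpr dvd_rfl)
end

section
/- Let ζ be a primitive element of F_{q^n} and 1 ≤ w ≤ n with (q,w) ≠ (2,n). Then for all k ∈ Z/(q^n−1)Z, the characteristic elementary symmetric function satisfies σ_w(ζ^k) = F_ζ[δ_w](k), where δ_w is the indicator function of Ω(w) and F_ζ is the DFT based on ζ. -/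
/-- `inOmega q n w j` : `j` is a sum of `w` distinct `q`-powers `q^i` with `0 ≤ i ≤ n-1`. -/
def inOmega (q n w j : ℕ) : Prop :=
  ∃ s : Finset (Fin n), s.card = w ∧ j = ∑ i ∈ s, q ^ (i : ℕ)

open scoped Classical in
/-- The indicator function `δ_w : ℤ/(qⁿ-1)ℤ → K` of `Ω(w)`. -/
noncomputable def deltaFun {K : Type*} [CommRing K] (q n w : ℕ)
    (k : ZMod (q ^ n - 1)) : K :=
  if inOmega q n w k.val then 1 else 0

/-- The `w`-th characteristic elementary symmetric function
`σ_w(ξ) = ∑_{0 ≤ i_1 < ⋯ < i_w ≤ n-1} ξ^{q^{i_1} + ⋯ + q^{i_w}}`. -/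
def sigmaCES {K : Type*} [CommRing K] (q n w : ℕ) (ξ : K) : K :=
  ∑ s ∈ Finset.univ.filter (fun s : Finset (Fin n) => s.card = w), ξ ^ (∑ i ∈ s, q ^ (i : ℕ))

/-!
Distinct subsets `s ⊆ {0, …, n-1}` give distinct base-`q` numbers `∑_{i ∈ s} q^i`, all lying in
`[0, q^n - 1)` except `∑_{i < n} 2^i = 2^n - 1` for `q = 2`, `s` full. So `s ↦ ∑_{i ∈ s} q^i` is a
bijection from `w`-subsets onto the canonical representatives of `Ω(w)`, and the DFT of `δ_w` is the
sum defining `σ_w`, reindexed along it.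
-/

open Finset

/-- `Ω(w)` as a set of naturals; these are its canonical representatives only once they are shown
to be `< q^n - 1` (`omegaFinset_subset_range`). -/
def omegaFinset (q n w : ℕ) : Finset ℕ :=
  (univ.filter fun s : Finset (Fin n) => s.card = w).image
    fun s : Finset (Fin n) => ∑ i ∈ s, q ^ (i : ℕ)

lemma mem_omegaFinset {q n w j : ℕ} : j ∈ omegaFinset q n w ↔ inOmega q n w j := by
  simp [omegaFinset, inOmega, eq_comm]

lemma geomSum_fin_injective {q : ℕ} (hq : 2 ≤ q) (n : ℕ) :
    Function.Injective fun s : Finset (Fin n) => ∑ i ∈ s, q ^ (i : ℕ) := by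
  intro s t h
  have hmap : ∑ i ∈ s.map Fin.valEmbedding, q ^ i = ∑ i ∈ t.map Fin.valEmbedding, q ^ i := by
    simpa [sum_map] using h
  exact map_injective _ (geomSum_injective hq hmap)

lemma geomSum_fin_lt_pow_sub_one_of_ne_univ {q n : ℕ} (hq : 2 ≤ q) {s : Finset (Fin n)}
    (hs : s ≠ univ) : ∑ i ∈ s, q ^ (i : ℕ) < q ^ n - 1 := by
  obtain ⟨b, hb⟩ := not_forall.1 (mt eq_univ_of_forall hs)
  have hlt : ∑ i ∈ insert b s, q ^ (i : ℕ) < q ^ n := by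
    have hmap := Nat.geomSum_lt hq (s := (insert b s).map Fin.valEmbedding) (n := n) (by simp)
    rwa [sum_map] at hmap
  rw [sum_insert hb] at hlt
  have hb_pos : 1 ≤ q ^ (b : ℕ) := Nat.one_le_pow _ _ (by omega)
  omega

lemma geomSum_fin_univ_lt_pow_sub_one {q n : ℕ} (hq : 3 ≤ q) (hn : 0 < n) :
    ∑ i : Fin n, q ^ (i : ℕ) < q ^ n - 1 := by
  rw [Fin.sum_univ_eq_sum_range (q ^ ·), Nat.geomSum_eq (by omega)]
  have hpow : 1 < q ^ n := Nat.one_lt_pow hn.ne' (by omega)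
  exact Nat.div_lt_self (by omega) (by omega)

lemma omegaFinset_subset_range {q n w : ℕ} (hq : 2 ≤ q) (hw : 1 ≤ w)
    (hqw : ¬(q = 2 ∧ w = n)) : omegaFinset q n w ⊆ range (q ^ n - 1) := by
  simp only [omegaFinset, subset_iff, mem_image, mem_filter, mem_univ, true_and, mem_range]
  rintro _ ⟨s, rfl, rfl⟩
  by_cases hs : s = univ
  · subst hs
    rw [card_univ, Fintype.card_fin] at hqw hw
    exact geomSum_fin_univ_lt_pow_sub_one (by omega) hw
  · exact geomSum_fin_lt_pow_sub_one_of_ne_univ hq hs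

lemma sigmaCES_eq_sum_omegaFinset {K : Type*} [CommRing K] {q : ℕ} (hq : 2 ≤ q) (n w : ℕ)
    (ξ : K) : sigmaCES q n w ξ = ∑ j ∈ omegaFinset q n w, ξ ^ j := by
  rw [sigmaCES, omegaFinset, sum_image fun _ _ _ _ h => geomSum_fin_injective hq n h]

lemma dft_deltaFun {K : Type*} [CommRing K] {q n w : ℕ} (ζ : K)
    (h : omegaFinset q n w ⊆ range (q ^ n - 1)) (k : ZMod (q ^ n - 1)) :
    dft (q ^ n - 1) ζ (deltaFun q n w) k = ∑ j ∈ omegaFinset q n w, ζ ^ (k.val * j) := by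
  classical
  have hterm : ∀ j ∈ range (q ^ n - 1), deltaFun q n w (j : ZMod (q ^ n - 1)) * ζ ^ (k.val * j)
      = if j ∈ omegaFinset q n w then ζ ^ (k.val * j) else 0 := by
    intro j hj
    simp [deltaFun, ZMod.val_natCast_of_lt (mem_range.1 hj), mem_omegaFinset]
  rw [dft, sum_congr rfl hterm, sum_ite_mem, inter_eq_right.2 h]

theorem sigma_eq_dft_delta_general
    {F K : Type*} [Field F] [Fintype F] [Field K]
    (n w : ℕ) (ζ : K)
    (hw1 : 1 ≤ w) (hqw : ¬ (Fintype.card F = 2 ∧ w = n)) :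
    ∀ k : ZMod (Fintype.card F ^ n - 1),
      sigmaCES (Fintype.card F) n w (ζ ^ k.val) =
        dft (Fintype.card F ^ n - 1) ζ (deltaFun (Fintype.card F) n w) k := by
  intro k
  have hq : 2 ≤ Fintype.card F := Fintype.one_lt_card
  rw [dft_deltaFun ζ (omegaFinset_subset_range hq hw1 hqw), sigmaCES_eq_sum_omegaFinset hq]
  simp only [pow_mul]

theorem sigma_eq_dft_delta
    {F K : Type*} [Field F] [Fintype F] [Field K] [Fintype K] [Algebra F K]
    (n w : ℕ) (hn : 2 ≤ n) (hcard : Fintype.card K = Fintype.card F ^ n)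
    (ζ : K) (hζ : orderOf ζ = Fintype.card K - 1)
    (hw1 : 1 ≤ w) (hwn : w ≤ n) (hqw : ¬ (Fintype.card F = 2 ∧ w = n)) :
    ∀ k : ZMod (Fintype.card F ^ n - 1),
      sigmaCES (Fintype.card F) n w (ζ ^ k.val) =
        dft (Fintype.card F ^ n - 1) ζ (deltaFun (Fintype.card F) n w) k :=
  sigma_eq_dft_delta_general n w ζ hw1 hqw
end

section
/- Let S ⊆ {0,1,...,n} be nonempty, and if q = 2 assume 0 ∉ S and n ∉ S. Let Q_n = (q^n−1)/(q−1). Then for all i ∈ Z/(q^n−1)Z, δ_{n−S}(i) = δ_S(Q_n − i), where n−S = {n−s : s ∈ S}. In particular δ_{n−S} is a shift of the reversal of δ_S and has the same least period as δ_S. -/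
open scoped Classical in
/-- The indicator function `δ_S : ℤ/(qⁿ-1)ℤ → 𝔽_p` of `Ω(S) = ⋃_{w ∈ S} Ω(w)`. -/
noncomputable def deltaS (p q n : ℕ) (S : Finset ℕ) (k : ZMod (q ^ n - 1)) : ZMod p :=
  if ∃ w ∈ S, inOmega q n w k.val then 1 else 0

lemma geom_nat (q n : ℕ) (hq : 1 ≤ q) :
    (q - 1) * ∑ k ∈ Finset.range n, q ^ k = q ^ n - 1 := by
  induction n with
  | zero => simp
  | succ n ih =>
    rw [Finset.sum_range_succ, Nat.mul_add, ih, pow_succ, mul_comm (q ^ n) q]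
    have h1 : 1 ≤ q ^ n := Nat.one_le_pow _ _ (by omega)
    have h2 : (q - 1) * q ^ n = q * q ^ n - q ^ n := by
      rw [Nat.sub_mul, one_mul]
    have h3 : q ^ n ≤ q * q ^ n := Nat.le_mul_of_pos_left _ (by omega)
    omega

lemma Q_eq (q n : ℕ) (hq : 2 ≤ q) :
    (q ^ n - 1) / (q - 1) = ∑ k ∈ Finset.range n, q ^ k := by
  exact Nat.div_eq_of_eq_mul_left (by omega)
    (by rw [mul_comm]; exact (geom_nat q n (by omega)).symm)

lemma key_s13 (q n : ℕ) (hq : 2 ≤ q) (hn : 1 ≤ n) (S : Finset ℕ)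
    (hSn : S ⊆ Finset.range (n + 1)) (hq2 : q = 2 → 0 ∉ S ∧ n ∉ S)
    (i : ZMod (q ^ n - 1))
    (h : ∃ w ∈ S.image (fun s => n - s), inOmega q n w i.val) :
    ∃ w ∈ S, inOmega q n w
      ((((q ^ n - 1) / (q - 1) : ℕ) : ZMod (q ^ n - 1)) - i).val := by
  obtain ⟨w', hw', s, hcard, hsum⟩ := h
  obtain ⟨w, hwS, rfl⟩ := Finset.mem_image.mp hw'
  have hwn : w ≤ n := by have := hSn hwS; simp [Finset.mem_range] at this; omega
  have hN2 : 2 ≤ q ^ n := le_trans hq (Nat.le_self_pow (by omega) q)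
  haveI : NeZero (q ^ n - 1) := ⟨by omega⟩
  set Q : ℕ := (q ^ n - 1) / (q - 1) with hQ
  have hQsum : Q = ∑ k ∈ Finset.range n, q ^ k := Q_eq q n hq
  have hQsum' : Q = ∑ i : Fin n, q ^ (i : ℕ) := by
    rw [hQsum, Fin.sum_univ_eq_sum_range]
  -- sum over complement
  have hcompl : (∑ j ∈ sᶜ, q ^ (j : ℕ)) + (∑ j ∈ s, q ^ (j : ℕ)) = Q := by
    rw [hQsum']
    exact Finset.sum_compl_add_sum s _
  have hle : i.val ≤ Q := by omega
  -- the complement cardinality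
  have hcardc : sᶜ.card = w := by
    have := Finset.card_compl s
    simp at this
    omega
  refine ⟨w, hwS, sᶜ, hcardc, ?_⟩
  -- now compute the val
  have hval : ((Q : ZMod (q ^ n - 1)) - i).val = Q - i.val := by
    rcases Nat.lt_or_ge Q (q ^ n - 1) with hlt | hge
    · have : (Q : ZMod (q ^ n - 1)) - i = ((Q - i.val : ℕ) : ZMod (q ^ n - 1)) := by
        rw [Nat.cast_sub hle, ZMod.natCast_val, ZMod.cast_id]
      rw [this, ZMod.val_cast_of_lt (by omega)]
    · -- q = 2 case : Q = q^n - 1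
      have hq2' : q = 2 := by
        by_contra hq3
        have h3 : 3 ≤ q := by omega
        have hQmul : (q - 1) * Q = q ^ n - 1 := by
          rw [hQsum]; exact geom_nat q n (by omega)
        have hQ1 : 1 ≤ Q := by
          rw [hQsum]
          calc 1 = q ^ 0 := (pow_zero q).symm
            _ ≤ ∑ k ∈ Finset.range n, q ^ k :=
              Finset.single_le_sum (f := fun k => q ^ k)
                (fun _ _ => Nat.zero_le _) (Finset.mem_range.mpr (by omega))
        have h2Q : 2 * Q ≤ (q - 1) * Q := Nat.mul_le_mul_right Q (by omega)
        omega
      obtain ⟨h0S, hnS⟩ := hq2 hq2'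
      have hw1 : w ≠ 0 := fun h => h0S (h ▸ hwS)
      have hwn1 : w ≠ n := fun h => hnS (h ▸ hwS)
      have hQN : Q = q ^ n - 1 := by
        have hQmul : (q - 1) * Q = q ^ n - 1 := by rw [hQsum]; exact geom_nat q n (by omega)
        rw [hq2'] at hQmul ⊢; simpa using hQmul
      -- i.val ≥ 1 since s nonempty
      have hs1 : 1 ≤ i.val := by
        have hsne : s.Nonempty := Finset.card_pos.mp (by omega)
        obtain ⟨j, hj⟩ := hsne
        have : q ^ (j : ℕ) ≤ ∑ j ∈ s, q ^ (j : ℕ) := Finset.single_le_sum (f := fun j : Fin n => q ^ (j : ℕ))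
          (fun _ _ => Nat.zero_le _) hj
        have hp1 : 1 ≤ q ^ (j : ℕ) := Nat.one_le_pow _ _ (by omega)
        omega
      have hi0 : i ≠ 0 := by
        intro h0
        rw [h0, ZMod.val_zero] at hs1
        omega
      have : (Q : ZMod (q ^ n - 1)) = 0 := by rw [hQN, ZMod.natCast_self]
      rw [this, zero_sub, ZMod.neg_val, if_neg hi0]
      omega
  rw [hval]
  omega

lemma image_image_eq (n : ℕ) (S : Finset ℕ) (hSn : S ⊆ Finset.range (n + 1)) :
    (S.image (fun s => n - s)).image (fun s => n - s) = S := by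
  rw [Finset.image_image]
  have : S.image ((fun s => n - s) ∘ fun s => n - s) = S.image id := by
    apply Finset.image_congr
    intro s hs
    have := hSn hs
    simp only [Finset.mem_range] at this
    simp only [Function.comp_apply, id]
    omega
  rw [this, Finset.image_id]

lemma period_iff {N : ℕ} {α : Type*} (f g : ZMod N → α) (c : ZMod N)
    (h : ∀ i, f i = g (c - i)) (r : ℕ) :
    IsPeriodicZMod f r ↔ IsPeriodicZMod g r := by
  constructor
  · intro hf j
    have h1 := h (c - (j + (r : ZMod N)))
    have h2 := h (c - j)
    have h3 := hf (c - (j + (r : ZMod N)))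
    have e1 : c - (c - (j + (r : ZMod N))) = j + (r : ZMod N) := by ring
    have e2 : c - (c - j) = j := by ring
    have e3 : c - (j + (r : ZMod N)) + (r : ZMod N) = c - j := by ring
    rw [e1] at h1
    rw [e2] at h2
    rw [e3] at h3
    rw [← h1, ← h3, h2]
  · intro hg i
    have hg' := hg (c - (i + (r : ZMod N)))
    have e3 : c - (i + (r : ZMod N)) + (r : ZMod N) = c - i := by ring
    rw [e3] at hg'
    rw [h i, h (i + (r : ZMod N)), hg']

theorem delta_reflection (p a q n : ℕ) (hp : p.Prime) (ha : 0 < a) (hq : q = p ^ a)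
    (hn : 1 ≤ n) (S : Finset ℕ) (hS : S.Nonempty) (hSn : S ⊆ Finset.range (n + 1))
    (hq2 : q = 2 → 0 ∉ S ∧ n ∉ S) :
    (∀ i : ZMod (q ^ n - 1),
        deltaS p q n (S.image (fun s => n - s)) i =
          deltaS p q n S ((((q ^ n - 1) / (q - 1) : ℕ) : ZMod (q ^ n - 1)) - i)) ∧
      leastPeriod (deltaS p q n (S.image (fun s => n - s))) =
        leastPeriod (deltaS p q n S) := by
  have hq2' : 2 ≤ q := by
    rw [hq]
    calc 2 ≤ p := hp.two_le
      _ ≤ p ^ a := Nat.le_self_pow (by omega) p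
  -- hypotheses for the reflected set
  set S' := S.image (fun s => n - s) with hS'
  have hS'n : S' ⊆ Finset.range (n + 1) := by
    intro x hx
    simp only [hS', Finset.mem_image] at hx
    obtain ⟨s, _, rfl⟩ := hx
    simp only [Finset.mem_range]
    omega
  have hq2'' : q = 2 → 0 ∉ S' ∧ n ∉ S' := by
    intro h2
    obtain ⟨h0, hnn⟩ := hq2 h2
    constructor
    · simp only [hS', Finset.mem_image, not_exists]
      rintro s ⟨hs, heq⟩
      have := hSn hs
      simp only [Finset.mem_range] at this
      have : s = n := by omega
      exact hnn (this ▸ hs)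
    · simp only [hS', Finset.mem_image, not_exists]
      rintro s ⟨hs, heq⟩
      have : s = 0 := by omega
      exact h0 (this ▸ hs)
  have himg : S'.image (fun s => n - s) = S := image_image_eq n S hSn
  have hpoint : ∀ i : ZMod (q ^ n - 1),
      deltaS p q n S' i =
        deltaS p q n S ((((q ^ n - 1) / (q - 1) : ℕ) : ZMod (q ^ n - 1)) - i) := by
    intro i
    classical
    unfold deltaS
    refine if_congr ⟨fun h => key_s13 q n hq2' hn S hSn hq2 i h, fun h => ?_⟩ rfl rfl
    have h' : ∃ w ∈ S'.image (fun s => n - s), inOmega q n w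
        ((((q ^ n - 1) / (q - 1) : ℕ) : ZMod (q ^ n - 1)) - i).val := by
      rw [himg]; exact h
    have := key_s13 q n hq2' hn S' hS'n hq2''
      ((((q ^ n - 1) / (q - 1) : ℕ) : ZMod (q ^ n - 1)) - i) h'
    have e : (((q ^ n - 1) / (q - 1) : ℕ) : ZMod (q ^ n - 1)) -
        ((((q ^ n - 1) / (q - 1) : ℕ) : ZMod (q ^ n - 1)) - i) = i := by ring
    rwa [e] at this
  refine ⟨hpoint, ?_⟩
  unfold leastPeriod
  congr 1
  ext r
  simp only [Set.mem_setOf_eq, and_congr_right_iff]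
  intro _
  exact period_iff _ _ _ hpoint r
end

section
/- Let q = 2, n ∈ ℕ, and S ⊆ {0,1,...,n−1} with S nonempty and S ≠ {0,1,...,n−1}. Then the indicator function δ_S : Z/(2^n−1)Z → F_2 of Ω(S) has maximum least period 2^n − 1. -/
/-!
Write a residue below `2ⁿ - 1` as `∑ i ∈ s, 2 ^ i` with `s` a proper subset of the `n` bit
positions, so that `δ_S` reads off `#s ∈ S`. Modulo `2ⁿ - 1` we have `2ⁿ = 1`, so the
positions are cyclic and `2 ^ b + 2 ^ b = 2 ^ (b + 1)` carries around the top. Let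
`0 < r < 2ⁿ - 1` be a period with bit set `σ`, `c = #σ`; as `-r` is a period too we may take
`2c ≤ n`. Adding `r` to a set `A` disjoint from `σ` raises the weight `#A` to `#A + c`. Pick
`b ∈ σ` with `b + 1 ∉ σ`; if `A` also avoids `b + 1`, adding `r` to `A ∪ {b}` carries `b` into
`b + 1` and turns weight `#A + 1` into `#A + c`. Together these make membership of the weights
`0, …, n - 1` in `S` constant, which `S` forbids.
-/

open Finset

theorem leastPeriod_eq_of_forall_le {N : ℕ} [NeZero N] {α : Type*} {f : ZMod N → α}
    (h : ∀ r, 0 < r → IsPeriodicZMod f r → N ≤ r) : leastPeriod f = N := by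
  have hN : IsPeriodicZMod f N := fun i => by rw [ZMod.natCast_self, add_zero]
  have hpos : 0 < N := Nat.pos_of_neZero N
  exact le_antisymm (Nat.sInf_le ⟨hpos, hN⟩)
    (le_csInf ⟨N, hpos, hN⟩ fun r hr => h r hr.1 hr.2)

def binaryValue {n : ℕ} (s : Finset (Fin n)) : ℕ := ∑ i ∈ s, 2 ^ (i : ℕ)

section binaryValue

variable {n : ℕ}

theorem binaryValue_injective : Function.Injective (binaryValue (n := n)) := by
  intro s t h
  refine map_injective Fin.valEmbedding (geomSum_injective le_rfl ?_)
  simpa only [binaryValue, sum_map, Fin.valEmbedding_apply] using h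

theorem binaryValue_lt_two_pow (s : Finset (Fin n)) : binaryValue s < 2 ^ n :=
  calc binaryValue s = ∑ i ∈ s.map Fin.valEmbedding, 2 ^ i := by
        simp only [binaryValue, sum_map, Fin.valEmbedding_apply]
    _ < 2 ^ n := Nat.geomSum_lt le_rfl (by simp)

theorem exists_binaryValue_eq {x : ℕ} (hx : x < 2 ^ n) :
    ∃ s : Finset (Fin n), binaryValue s = x := by
  let g : Finset (Fin n) → Fin (2 ^ n) := fun s => ⟨binaryValue s, binaryValue_lt_two_pow s⟩
  have hg : Function.Bijective g := (Fintype.bijective_iff_injective_and_card g).2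
    ⟨fun s t h => binaryValue_injective (Fin.mk.inj_iff.1 h), by simp⟩
  obtain ⟨s, hs⟩ := hg.2 ⟨x, hx⟩
  exact ⟨s, Fin.mk.inj_iff.1 hs⟩

@[simp]
theorem binaryValue_empty : binaryValue (∅ : Finset (Fin n)) = 0 := sum_empty

@[simp]
theorem binaryValue_univ : binaryValue (univ : Finset (Fin n)) = 2 ^ n - 1 := by
  rw [binaryValue, Fin.sum_univ_eq_sum_range (2 ^ ·), Nat.geomSum_eq le_rfl, Nat.div_one]

theorem binaryValue_add_binaryValue_compl (s : Finset (Fin n)) :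
    binaryValue s + binaryValue sᶜ = 2 ^ n - 1 := by
  rw [binaryValue, binaryValue, sum_add_sum_compl, ← binaryValue, binaryValue_univ]

theorem binaryValue_lt_of_ne_univ {s : Finset (Fin n)} (hs : s ≠ univ) :
    binaryValue s < 2 ^ n - 1 := by
  obtain ⟨i, hi⟩ := (compl_ne_univ_iff_nonempty sᶜ).1 (by rwa [compl_compl])
  have : 0 < binaryValue sᶜ := lt_of_lt_of_le (Nat.two_pow_pos i)
    (single_le_sum (f := fun i : Fin n => 2 ^ (i : ℕ)) (fun _ _ => Nat.zero_le _) hi)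
  have := binaryValue_add_binaryValue_compl s
  omega

theorem binaryValue_union {s t : Finset (Fin n)} (h : Disjoint s t) :
    binaryValue (s ∪ t) = binaryValue s + binaryValue t :=
  sum_union h

theorem binaryValue_insert {s : Finset (Fin n)} {i : Fin n} (hi : i ∉ s) :
    binaryValue (insert i s) = 2 ^ (i : ℕ) + binaryValue s :=
  sum_insert hi

theorem cast_binaryValue_compl (s : Finset (Fin n)) :
    (binaryValue sᶜ : ZMod (2 ^ n - 1)) = -binaryValue s := by
  refine eq_neg_of_add_eq_zero_right ?_
  rw [← Nat.cast_add, binaryValue_add_binaryValue_compl, ZMod.natCast_self]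

theorem ZMod.two_pow_eq_one : (2 : ZMod (2 ^ n - 1)) ^ n = 1 := by
  have : ((2 ^ n - 1 + 1 : ℕ) : ZMod (2 ^ n - 1)) = 1 := by
    rw [Nat.cast_add, ZMod.natCast_self, zero_add, Nat.cast_one]
  rwa [Nat.sub_add_cancel Nat.one_le_two_pow, Nat.cast_pow, Nat.cast_ofNat] at this

theorem two_pow_val_add_one [NeZero n] (b : Fin n) :
    (2 : ZMod (2 ^ n - 1)) ^ ((b + 1 : Fin n) : ℕ) = 2 * 2 ^ (b : ℕ) := by
  calc (2 : ZMod (2 ^ n - 1)) ^ ((b + 1 : Fin n) : ℕ) = 2 ^ ((b : ℕ) + 1 % n) := by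
        rw [Fin.val_add, Fin.val_one', ← pow_eq_pow_mod _ ZMod.two_pow_eq_one]
    _ = 2 * 2 ^ (b : ℕ) := by
        rw [pow_add, ← pow_eq_pow_mod _ ZMod.two_pow_eq_one, pow_one, mul_comm]

-- `b + 1` is computed in `Fin n`: a carry out of the top bit wraps around to bit `0`.
theorem cast_binaryValue_insert_add_one_erase [NeZero n] {σ : Finset (Fin n)} {b : Fin n}
    (hb : b ∈ σ) (hb' : b + 1 ∉ σ) :
    (binaryValue (insert (b + 1) (σ.erase b)) : ZMod (2 ^ n - 1)) =
      2 ^ (b : ℕ) + binaryValue σ := by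
  have hσ : binaryValue σ = 2 ^ (b : ℕ) + binaryValue (σ.erase b) :=
    (add_sum_erase σ _ hb).symm
  rw [binaryValue_insert (fun h => hb' (mem_of_mem_erase h)), hσ]
  push_cast
  rw [two_pow_val_add_one]
  ring

end binaryValue

theorem inOmega_binaryValue_iff {n w : ℕ} {s : Finset (Fin n)} :
    inOmega 2 n w (binaryValue s) ↔ s.card = w :=
  ⟨fun ⟨_, ht, h⟩ => binaryValue_injective h ▸ ht, fun h => ⟨s, h, rfl⟩⟩

open scoped Classical in
theorem deltaS_binaryValue {n : ℕ} {S : Finset ℕ} {s : Finset (Fin n)} (hs : s ≠ univ) :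
    deltaS 2 2 n S (binaryValue s) = if s.card ∈ S then 1 else 0 := by
  simp only [deltaS, ZMod.val_natCast_of_lt (binaryValue_lt_of_ne_univ hs),
    inOmega_binaryValue_iff, exists_eq_right']

theorem exists_disjoint_card_eq {α : Type*} [Fintype α] [DecidableEq α] {j : ℕ} (t : Finset α)
    (h : j + t.card ≤ Fintype.card α) : ∃ A : Finset α, Disjoint A t ∧ A.card = j := by
  obtain ⟨A, hA, hcard⟩ := exists_subset_card_eq (s := tᶜ) (n := j)
    (by rw [card_compl]; omega)
  exact ⟨A, disjoint_of_subset_left hA disjoint_compl_left, hcard⟩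

open Fin.NatCast in
theorem Fin.exists_mem_add_one_notMem {n : ℕ} [NeZero n] {σ : Finset (Fin n)}
    (hne : σ.Nonempty) (hσ : σ ≠ univ) : ∃ b ∈ σ, b + 1 ∉ σ := by
  by_contra! h
  obtain ⟨a, ha⟩ := hne
  have hadd : ∀ k : ℕ, a + (k : Fin n) ∈ σ := by
    intro k
    induction k with
    | zero => simpa using ha
    | succ k ih => simpa [← add_assoc] using h _ ih
  exact hσ (eq_univ_of_forall fun x => by simpa using hadd (x - a : Fin n).val)

theorem iff_zero_of_shift_iff {χ : ℕ → Prop} {n c : ℕ} (hcn : 2 * c ≤ n)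
    (hshift : ∀ j, j + c < n → (χ j ↔ χ (j + c)))
    (hcarry : ∀ j, j + c < n → (χ (j + 1) ↔ χ (j + c))) :
    ∀ v < n, (χ v ↔ χ 0) := by
  have hlow : ∀ v ≤ n - c, (χ v ↔ χ 0) := by
    intro v hv
    induction v with
    | zero => rfl
    | succ v ih =>
      exact ((hcarry v (by omega)).trans (hshift v (by omega)).symm).trans (ih (by omega))
  intro v hv
  by_cases h : v ≤ n - c
  · exact hlow v h
  · obtain ⟨u, rfl⟩ : ∃ u, v = u + c := ⟨v - c, by omega⟩
    exact (hshift u (by omega)).symm.trans (hlow u (by omega))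

section Periodic

variable {n : ℕ} {S : Finset ℕ} {σ : Finset (Fin n)}

theorem card_mem_iff_of_periodic
    (hf : Function.Periodic (deltaS 2 2 n S) (binaryValue σ : ZMod (2 ^ n - 1)))
    {X Y : Finset (Fin n)} (hX : X.card < n) (hY : Y.card < n)
    (hXY : (binaryValue X + binaryValue σ : ZMod (2 ^ n - 1)) = binaryValue Y) :
    X.card ∈ S ↔ Y.card ∈ S := by
  have hne : ∀ {Z : Finset (Fin n)}, Z.card < n → Z ≠ univ := fun hZ =>
    (card_lt_iff_ne_univ _).1 (by rwa [Fintype.card_fin])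
  have h := hf (binaryValue X)
  rw [hXY, deltaS_binaryValue (hne hY), deltaS_binaryValue (hne hX)] at h
  split_ifs at h <;> simp_all

theorem shift_iff_of_periodic
    (hf : Function.Periodic (deltaS 2 2 n S) (binaryValue σ : ZMod (2 ^ n - 1)))
    {j : ℕ} (hj : j + σ.card < n) : j ∈ S ↔ j + σ.card ∈ S := by
  obtain ⟨A, hA, rfl⟩ := exists_disjoint_card_eq (j := j) σ
    (by rw [Fintype.card_fin]; omega)
  have hcard : (A ∪ σ).card = A.card + σ.card := card_union_of_disjoint hA
  rw [← hcard]
  refine card_mem_iff_of_periodic hf (by omega) (by omega) ?_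
  rw [binaryValue_union hA, Nat.cast_add]

theorem carry_iff_of_periodic [NeZero n]
    (hf : Function.Periodic (deltaS 2 2 n S) (binaryValue σ : ZMod (2 ^ n - 1)))
    {b : Fin n} (hb : b ∈ σ) (hb' : b + 1 ∉ σ) {j : ℕ} (hj : j + σ.card < n) :
    j + 1 ∈ S ↔ j + σ.card ∈ S := by
  obtain ⟨A, hA, rfl⟩ := exists_disjoint_card_eq (j := j) (insert (b + 1) σ)
    (by rw [card_insert_of_notMem hb', Fintype.card_fin]; omega)
  rw [disjoint_insert_right] at hA
  have hbA : b ∉ A := disjoint_right.1 hA.2 hb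
  have hAσ' : Disjoint A (insert (b + 1) (σ.erase b)) :=
    disjoint_insert_right.2 ⟨hA.1, disjoint_of_subset_right (erase_subset b σ) hA.2⟩
  have hc : 0 < σ.card := card_pos.2 ⟨b, hb⟩
  have hX : (insert b A).card = A.card + 1 := card_insert_of_notMem hbA
  have hY : (A ∪ insert (b + 1) (σ.erase b)).card = A.card + σ.card := by
    rw [card_union_of_disjoint hAσ', card_insert_of_notMem (fun h => hb' (mem_of_mem_erase h)),
      card_erase_of_mem hb, Nat.sub_add_cancel hc]
  rw [← hX, ← hY]
  refine card_mem_iff_of_periodic hf (by omega) (by omega) ?_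
  rw [binaryValue_insert hbA, binaryValue_union hAσ', Nat.cast_add, Nat.cast_add,
    cast_binaryValue_insert_add_one_erase hb hb']
  push_cast
  ring

theorem mem_iff_zero_mem_of_periodic (hne : σ.Nonempty) (hσ : σ ≠ univ)
    (hf : Function.Periodic (deltaS 2 2 n S) (binaryValue σ : ZMod (2 ^ n - 1))) :
    ∀ v < n, (v ∈ S ↔ 0 ∈ S) := by
  wlog hc : 2 * σ.card ≤ n generalizing σ
  · have hne' : σᶜ.Nonempty := (compl_ne_univ_iff_nonempty σᶜ).1 (by rwa [compl_compl])
    have hσ' : σᶜ ≠ univ := (compl_ne_univ_iff_nonempty σ).2 hne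
    have hf' : Function.Periodic (deltaS 2 2 n S) (binaryValue σᶜ : ZMod (2 ^ n - 1)) := by
      rw [cast_binaryValue_compl]
      exact hf.neg
    refine this hne' hσ' hf' ?_
    rw [card_compl, Fintype.card_fin]
    omega
  have : NeZero n := ⟨by rintro rfl; exact hσ (Subsingleton.elim _ _)⟩
  obtain ⟨b, hb, hb'⟩ := Fin.exists_mem_add_one_notMem hne hσ
  exact iff_zero_of_shift_iff hc (fun _ => shift_iff_of_periodic hf)
    (fun _ => carry_iff_of_periodic hf hb hb')

end Periodic

theorem delta_max_period_two (n : ℕ) (S : Finset ℕ) (hS : S.Nonempty)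
    (hSn : S ⊆ Finset.range n) (hSne : S ≠ Finset.range n) :
    leastPeriod (deltaS 2 2 n S) = 2 ^ n - 1 := by
  obtain ⟨u, hu⟩ := hS
  obtain ⟨v, hv, hvS⟩ := exists_of_ssubset (Finset.ssubset_iff_subset_ne.2 ⟨hSn, hSne⟩)
  have hun : u < n := mem_range.1 (hSn hu)
  have : NeZero (2 ^ n - 1) := ⟨by have := Nat.one_lt_two_pow (n := n) (by omega); omega⟩
  refine leastPeriod_eq_of_forall_le fun r hr hf => ?_
  by_contra! hlt
  obtain ⟨σ, rfl⟩ := exists_binaryValue_eq (n := n) (x := r) (by omega)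
  have hconst := mem_iff_zero_mem_of_periodic
    (nonempty_iff_ne_empty.2 (by rintro rfl; simp at hr)) (by rintro rfl; simp at hlt) hf
  exact hvS ((hconst v (mem_range.1 hv)).2 ((hconst u hun).1 hu))
end

section
/- Let q ≥ 4 be a prime power, n ∈ ℕ, and S ⊆ {0,1,...,n} nonempty. Then the indicator function δ_S : Z/(q^n−1)Z → F_p of Ω(S) has maximum least period q^n − 1. For q = 3 the same holds provided S ≠ {0, n}. -/
/-!
A period `r` of `δ_S` can be replaced by `gcd r N`, where `N = qⁿ - 1`, so only proper divisors
`d` of `N` need to be ruled out. Translating an element of `Ω(S)` by multiples of `d` reaches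
`[N - d, N) ⊆ [N/2, N)`, whereas `Ω(S)` lies in `[0, U]` with `U = N/(q - 1)` the base-`q`
repunit. Hence `q = 3`, `d = U` and `U ∈ Ω(S)`. Then translation by `U` swaps `0` and `U`, and it
pushes `Ω(w)` for `0 < w < n` into `(U, N)`, outside `Ω(S)`; so `S = {0, n}`.
-/

open Finset

section Periodic

variable {N : ℕ} {α : Type*} {f : ZMod N → α}

lemma IsPeriodicZMod.gcd {r : ℕ} (hf : IsPeriodicZMod f r) : IsPeriodicZMod f (r.gcd N) := by
  have hbezout : ((r.gcd N : ℕ) : ZMod N) = (r.gcdA N : ZMod N) * r := by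
    have := congrArg (Int.cast : ℤ → ZMod N) (Nat.gcd_eq_gcd_ab r N)
    push_cast [ZMod.natCast_self] at this
    rw [this, zero_mul, add_zero, mul_comm]
  unfold IsPeriodicZMod
  rw [hbezout]
  exact Function.Periodic.int_mul hf _

lemma IsPeriodicZMod.exists_ge_sub {d : ℕ} (hf : IsPeriodicZMod f d) (hN : 0 < N)
    (hdN : d ∣ N) (x : ℕ) : ∃ y, N - d ≤ y ∧ y < N ∧ f y = f x := by
  obtain ⟨k, rfl⟩ : ∃ k, N = d * k + d := by
    obtain ⟨m, rfl⟩ := hdN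
    rcases m with _ | k
    · simp at hN
    · exact ⟨k, mul_add_one d k⟩
  have hd : 0 < d := Nat.pos_of_ne_zero (by rintro rfl; simp at hN)
  have hper : Function.Periodic f (d : ZMod (d * k + d)) := hf
  have := Nat.mod_lt x hd
  refine ⟨x % d + k * d, by rw [mul_comm]; omega, by rw [mul_comm]; omega, ?_⟩
  conv_rhs => rw [← Nat.mod_add_div' x d]
  push_cast
  rw [hper.nat_mul k, hper.nat_mul (x / d)]

lemma leastPeriod_eq_of_forall_dvd_not_periodic (hN : 0 < N)
    (h : ∀ d, d ∣ N → d < N → ¬ IsPeriodicZMod f d) : leastPeriod f = N := by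
  have hmem : N ∈ {r : ℕ | 0 < r ∧ IsPeriodicZMod f r} :=
    ⟨hN, fun i => by rw [ZMod.natCast_self, add_zero]⟩
  refine le_antisymm (Nat.sInf_le hmem) (le_csInf ⟨N, hmem⟩ ?_)
  rintro r ⟨hr, hf⟩
  by_contra! hrN
  exact h _ (Nat.gcd_dvd_right r N) ((Nat.gcd_le_left N hr).trans_lt hrN) hf.gcd

end Periodic

def repunit (q n : ℕ) : ℕ := ∑ i ∈ range n, q ^ i

lemma sum_univ_pow_eq_repunit (q n : ℕ) : ∑ i : Fin n, q ^ (i : ℕ) = repunit q n :=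
  Fin.sum_univ_eq_sum_range (q ^ ·) n

lemma pred_mul_repunit {q : ℕ} (hq : 0 < q) (n : ℕ) : (q - 1) * repunit q n = q ^ n - 1 := by
  have := geom_sum_mul_add (q - 1) n
  rw [Nat.sub_add_cancel (show 1 ≤ q from hq)] at this
  rw [repunit, mul_comm]
  omega

lemma repunit_pos (q : ℕ) {n : ℕ} (hn : 0 < n) : 0 < repunit q n :=
  Finset.sum_pos' (fun _ _ => Nat.zero_le _) ⟨0, mem_range.2 hn, by simp⟩

section Omega

variable {q n w j : ℕ}

lemma exists_inOmega (hw : w ≤ n) : ∃ j, inOmega q n w j := by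
  obtain ⟨s, -, hs⟩ := exists_subset_card_eq (s := (univ : Finset (Fin n))) (by simpa using hw)
  exact ⟨_, s, hs, rfl⟩

lemma inOmega.le_repunit (h : inOmega q n w j) : j ≤ repunit q n := by
  obtain ⟨s, -, rfl⟩ := h
  rw [← sum_univ_pow_eq_repunit]
  exact sum_le_sum_of_subset (subset_univ s)

lemma inOmega.lt_repunit (hq : 0 < q) (hw : w < n) (h : inOmega q n w j) :
    j < repunit q n := by
  obtain ⟨s, rfl, rfl⟩ := h
  obtain ⟨i, hi⟩ : ∃ i, i ∉ s := by
    by_contra! hall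
    simp [eq_univ_iff_forall.2 hall] at hw
  rw [← sum_univ_pow_eq_repunit]
  exact sum_lt_sum_of_subset (subset_univ s) (mem_univ i) hi (pow_pos hq _)
    (fun _ _ _ => Nat.zero_le _)

lemma inOmega.pos (hq : 0 < q) (hw : 0 < w) (h : inOmega q n w j) : 0 < j := by
  obtain ⟨s, rfl, rfl⟩ := h
  exact sum_pos (fun i _ => pow_pos hq _) (card_pos.1 hw)

end Omega

section Delta

variable {p q n : ℕ} {S : Finset ℕ} [Nontrivial (ZMod p)]

lemma deltaS_natCast_eq_one_iff {x : ℕ} (hx : x < q ^ n - 1) :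
    deltaS p q n S x = 1 ↔ ∃ w ∈ S, inOmega q n w x := by
  simp [deltaS, ZMod.val_cast_of_lt hx]

theorem eq_three_and_eq_repunit_of_periodic_deltaS (hq : 3 ≤ q) (hn : 0 < n) (hS : S.Nonempty)
    (hSn : ∀ w ∈ S, w ≤ n) {d : ℕ} (hdN : d ∣ q ^ n - 1) (hdlt : d < q ^ n - 1)
    (hf : IsPeriodicZMod (deltaS p q n S) d) :
    q = 3 ∧ d = repunit q n ∧ ∃ w ∈ S, inOmega q n w (repunit q n) := by
  set U := repunit q n
  have hN : (q - 1) * U = q ^ n - 1 := pred_mul_repunit (by omega) n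
  have hU : 0 < U := repunit_pos q hn
  have hUN : U < q ^ n - 1 := by
    have : 2 * U ≤ (q - 1) * U := Nat.mul_le_mul_right U (by omega)
    omega
  obtain ⟨w, hwS⟩ := hS
  obtain ⟨x, hx⟩ := exists_inOmega (q := q) (hSn w hwS)
  obtain ⟨y, hyd, hyN, hfy⟩ := hf.exists_ge_sub (by omega) hdN x
  rw [(deltaS_natCast_eq_one_iff (hx.le_repunit.trans_lt hUN)).2 ⟨w, hwS, hx⟩,
    deltaS_natCast_eq_one_iff hyN] at hfy
  obtain ⟨w', hw'S, hy⟩ := hfy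
  have hyU := hy.le_repunit
  have h2d : 2 * d ≤ q ^ n - 1 := by
    obtain ⟨m, hm⟩ := hdN
    have hm2 : 2 ≤ m := by
      by_contra! hm2
      interval_cases m <;> simp_all
    rw [hm, mul_comm]
    exact Nat.mul_le_mul_left d hm2
  have hq3 : q = 3 := by
    have : (q - 1) * U ≤ 2 * U := by omega
    have := Nat.le_of_mul_le_mul_right this hU
    omega
  subst hq3
  exact ⟨rfl, by omega, w', hw'S, by rwa [show y = U by omega] at hy⟩

theorem eq_pair_of_periodic_deltaS_repunit (hn : 0 < n) (hSn : ∀ w ∈ S, w ≤ n)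
    (hf : IsPeriodicZMod (deltaS p 3 n S) (repunit 3 n))
    (hU : ∃ w ∈ S, inOmega 3 n w (repunit 3 n)) : S = {0, n} := by
  set U := repunit 3 n
  have hN : (3 - 1) * U = 3 ^ n - 1 := pred_mul_repunit (by norm_num) n
  have hU0 : 0 < U := repunit_pos 3 hn
  have htranslate (x : ℕ) : deltaS p 3 n S (x + U : ℕ) = deltaS p 3 n S x := by
    push_cast
    exact hf x
  have h0 : 0 ∈ S := by
    have hwrap : ((U + U : ℕ) : ZMod (3 ^ n - 1)) = (0 : ℕ) := by
      rw [← two_mul, show 2 * U = 3 ^ n - 1 by omega, ZMod.natCast_self, Nat.cast_zero]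
    have hf0 := htranslate U
    rw [hwrap, (deltaS_natCast_eq_one_iff (by omega)).2 hU,
      deltaS_natCast_eq_one_iff (by omega)] at hf0
    obtain ⟨w, hw, h0w⟩ := hf0
    obtain rfl | hw0 := Nat.eq_zero_or_pos w
    · exact hw
    · exact absurd (h0w.pos (by norm_num) hw0) (lt_irrefl 0)
  have hnS : n ∈ S := by
    obtain ⟨w, hw, hUw⟩ := hU
    obtain rfl | hwn := (hSn w hw).eq_or_lt
    · exact hw
    · exact absurd (hUw.lt_repunit (by norm_num) hwn) (lt_irrefl U)
  ext w
  simp only [mem_insert, mem_singleton]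
  refine ⟨fun hw => ?_, by rintro (rfl | rfl) <;> assumption⟩
  by_contra! hw0n
  obtain ⟨z, hz⟩ := exists_inOmega (q := 3) (hSn w hw)
  have hz0 := hz.pos (by norm_num) (Nat.pos_of_ne_zero hw0n.1)
  have hzU : z < U := hz.lt_repunit (by norm_num) ((hSn w hw).lt_of_ne hw0n.2)
  have hfz := htranslate z
  rw [(deltaS_natCast_eq_one_iff (by omega)).2 ⟨w, hw, hz⟩,
    deltaS_natCast_eq_one_iff (by omega)] at hfz
  obtain ⟨_, -, hzU_mem⟩ := hfz
  have := hzU_mem.le_repunit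
  omega

end Delta

theorem delta_max_period_ge_three_general (p q n : ℕ) (hp : p.Prime)
    (hq3 : 3 ≤ q) (hn : 1 ≤ n)
    (S : Finset ℕ) (hS : S.Nonempty) (hSn : S ⊆ Finset.range (n + 1))
    (hq3S : q = 3 → S ≠ {0, n}) :
    leastPeriod (deltaS p q n S) = q ^ n - 1 := by
  have : Fact p.Prime := ⟨hp⟩
  have hSn' : ∀ w ∈ S, w ≤ n := fun w hw => Nat.lt_succ_iff.1 (mem_range.1 (hSn hw))
  have hN : 0 < q ^ n - 1 := Nat.sub_pos_of_lt (Nat.one_lt_pow (by omega) (by omega))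
  refine leastPeriod_eq_of_forall_dvd_not_periodic hN fun d hdN hdlt hf => ?_
  obtain ⟨rfl, rfl, hU⟩ := eq_three_and_eq_repunit_of_periodic_deltaS hq3 hn hS hSn' hdN hdlt hf
  exact hq3S rfl (eq_pair_of_periodic_deltaS_repunit hn hSn' hf hU)

theorem delta_max_period_ge_three (p a q n : ℕ) (hp : p.Prime) (ha : 0 < a)
    (hq : q = p ^ a) (hq3 : 3 ≤ q) (hn : 1 ≤ n)
    (S : Finset ℕ) (hS : S.Nonempty) (hSn : S ⊆ Finset.range (n + 1))
    (hq3S : q = 3 → S ≠ {0, n}) :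
    leastPeriod (deltaS p q n S) = q ^ n - 1 :=
  delta_max_period_ge_three_general p q n hp hq3 hn S hS hSn hq3S
end
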